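/- arXiv:1508.07450 — 4 statements merged into one kernel-verified Lean document; each statement's English description precedes it below -/
import Mathlib

section
/- Let {(W_i, v_i)}_{i∈I} be a fusion frame for H with bounds A and B, and let U be a bounded invertible operator on H. Then {(U W_i, v_i)}_{i∈I} is a fusion frame for H with bounds A/(‖U‖²‖U⁻¹‖²) and B‖U‖²‖U⁻¹‖². -/
/-! Put `y = U† x`, so that `x = (U⁻¹)† y`. Since `U† (x - P_{U Wᵢ} x)` is orthogonal to `Wᵢ`,
`P_{Wᵢ} y = P_{Wᵢ} (U† (P_{U Wᵢ} x))`, whence `‖P_{Wᵢ} y‖ ≤ ‖U‖ ‖P_{U Wᵢ} x‖`; symmetrically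
`‖P_{U Wᵢ} x‖ ≤ ‖U⁻¹‖ ‖P_{Wᵢ} y‖`. So the frame sums of the two families at `x` and at `y` agree
up to the factors `‖U‖²` and `‖U⁻¹‖²`, as do `‖x‖²` and `‖y‖²`, and the frame inequalities of
`(Wᵢ, vᵢ)` at `y` become those of `(U Wᵢ, vᵢ)` at `x`. -/

open scoped InnerProduct

section

variable {𝕜 E F I : Type*} [RCLike 𝕜]
  [NormedAddCommGroup E] [InnerProductSpace 𝕜 E] [NormedAddCommGroup F] [InnerProductSpace 𝕜 F]

noncomputable def fusionFrameTerm (W : I → Submodule 𝕜 E) [∀ i, (W i).HasOrthogonalProjection]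
    (v : I → ℝ) (x : E) (i : I) : ℝ :=
  v i ^ 2 * ‖((W i).orthogonalProjectionOnto x : E)‖ ^ 2

def FusionFrameBounds (W : I → Submodule 𝕜 E) [∀ i, (W i).HasOrthogonalProjection] (v : I → ℝ)
    (A B : ℝ) : Prop :=
  ∀ x : E,
    A * ‖x‖ ^ 2 ≤ ∑' i, fusionFrameTerm W v x i ∧ ∑' i, fusionFrameTerm W v x i ≤ B * ‖x‖ ^ 2

/-- A positive lower frame bound rules out the junk value `∑' = 0` of a divergent sum. -/
theorem FusionFrameBounds.summable {W : I → Submodule 𝕜 E} [∀ i, (W i).HasOrthogonalProjection]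
    {v : I → ℝ} {A B : ℝ} (h : FusionFrameBounds W v A B) (hA : 0 < A) (x : E) :
    Summable (fusionFrameTerm W v x) := by
  by_contra hdiv
  have hlow := (h x).1
  rw [tsum_eq_zero_of_not_summable hdiv] at hlow
  have hx : x = 0 := by
    by_contra hx
    have : 0 < A * ‖x‖ ^ 2 := by positivity
    linarith
  subst hx
  have hzero : fusionFrameTerm W v 0 = 0 := funext fun i => by simp [fusionFrameTerm]
  exact hdiv (hzero ▸ summable_zero)

section Adjoint

variable [CompleteSpace E] [CompleteSpace F]

theorem norm_orthogonalProjectionOnto_adjoint_apply_le {W : Submodule 𝕜 E} {V : Submodule 𝕜 F}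
    [W.HasOrthogonalProjection] [V.HasOrthogonalProjection] {T : E →L[𝕜] F}
    (hWV : W.map (T : E →ₗ[𝕜] F) ≤ V) (x : F) :
    ‖W.orthogonalProjectionOnto ((T†) x)‖ ≤ ‖T‖ * ‖V.orthogonalProjectionOnto x‖ := by
  have hperp : (T†) (x - V.starProjection x) ∈ Wᗮ := fun w hw => by
    rw [ContinuousLinearMap.adjoint_inner_right]
    exact V.sub_starProjection_mem_orthogonal x _ (hWV ⟨w, hw, rfl⟩)
  have hproj : W.orthogonalProjectionOnto ((T†) x) =
      W.orthogonalProjectionOnto ((T†) (V.starProjection x)) := by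
    rw [← sub_eq_zero, ← map_sub, ← map_sub]
    exact W.orthogonalProjectionOnto_apply_of_mem_orthogonal hperp
  calc ‖W.orthogonalProjectionOnto ((T†) x)‖
      = ‖W.orthogonalProjectionOnto ((T†) (V.starProjection x))‖ := by rw [hproj]
    _ ≤ ‖(T†) (V.starProjection x)‖ := W.norm_orthogonalProjectionOnto_apply_le _
    _ ≤ ‖T†‖ * ‖V.starProjection x‖ := (T†).le_opNorm _
    _ = ‖T‖ * ‖V.orthogonalProjectionOnto x‖ := by
      rw [LinearIsometryEquiv.norm_map]; rfl

section Family

variable {W : I → Submodule 𝕜 E} {V : I → Submodule 𝕜 F} [∀ i, (W i).HasOrthogonalProjection]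
  [∀ i, (V i).HasOrthogonalProjection] {T : E →L[𝕜] F}

theorem fusionFrameTerm_adjoint_le (hWV : ∀ i, (W i).map (T : E →ₗ[𝕜] F) ≤ V i) (v : I → ℝ)
    (x : F) (i : I) : fusionFrameTerm W v ((T†) x) i ≤ ‖T‖ ^ 2 * fusionFrameTerm V v x i := by
  have h := norm_orthogonalProjectionOnto_adjoint_apply_le (hWV i) x
  unfold fusionFrameTerm
  calc v i ^ 2 * ‖((W i).orthogonalProjectionOnto ((T†) x) : E)‖ ^ 2
      ≤ v i ^ 2 * (‖T‖ * ‖((V i).orthogonalProjectionOnto x : F)‖) ^ 2 := by gcongr; exact h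
    _ = ‖T‖ ^ 2 * (v i ^ 2 * ‖((V i).orthogonalProjectionOnto x : F)‖ ^ 2) := by ring

theorem summable_fusionFrameTerm_adjoint (hWV : ∀ i, (W i).map (T : E →ₗ[𝕜] F) ≤ V i)
    {v : I → ℝ} {x : F} (hs : Summable (fusionFrameTerm V v x)) :
    Summable (fusionFrameTerm W v ((T†) x)) :=
  (hs.mul_left _).of_nonneg_of_le (fun _ => by unfold fusionFrameTerm; positivity)
    (fusionFrameTerm_adjoint_le hWV v x)

theorem tsum_fusionFrameTerm_adjoint_le (hWV : ∀ i, (W i).map (T : E →ₗ[𝕜] F) ≤ V i)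
    {v : I → ℝ} {x : F} (hs : Summable (fusionFrameTerm V v x)) :
    ∑' i, fusionFrameTerm W v ((T†) x) i ≤ ‖T‖ ^ 2 * ∑' i, fusionFrameTerm V v x i := by
  rw [← tsum_mul_left]
  exact (summable_fusionFrameTerm_adjoint hWV hs).tsum_le_tsum
    (fusionFrameTerm_adjoint_le hWV v x) (hs.mul_left _)

end Family

theorem ContinuousLinearEquiv.adjoint_symm_adjoint_apply (U : E ≃L[𝕜] F) (x : F) :
    ((U.symm : F →L[𝕜] E)†) (((U : E →L[𝕜] F)†) x) = x := by
  rw [← ContinuousLinearMap.comp_apply, ← ContinuousLinearMap.adjoint_comp,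
    U.coe_comp_coe_symm, ContinuousLinearMap.adjoint_id, ContinuousLinearMap.id_apply]

theorem FusionFrameBounds.map_equiv {W : I → Submodule 𝕜 E} [∀ i, (W i).HasOrthogonalProjection]
    {v : I → ℝ} {A B : ℝ} (h : FusionFrameBounds W v A B) (hA : 0 < A) (hAB : A ≤ B)
    (U : E ≃L[𝕜] F) [∀ i, ((W i).map ((U : E →L[𝕜] F) : E →ₗ[𝕜] F)).HasOrthogonalProjection] :
    FusionFrameBounds (fun i => (W i).map ((U : E →L[𝕜] F) : E →ₗ[𝕜] F)) v
      (A / (‖(U : E →L[𝕜] F)‖ ^ 2 * ‖(U.symm : F →L[𝕜] E)‖ ^ 2))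
      (B * (‖(U : E →L[𝕜] F)‖ ^ 2 * ‖(U.symm : F →L[𝕜] E)‖ ^ 2)) := by
  intro x
  set V := fun i => (W i).map ((U : E →L[𝕜] F) : E →ₗ[𝕜] F)
  set a := ‖(U : E →L[𝕜] F)‖
  set b := ‖(U.symm : F →L[𝕜] E)‖
  set y := ((U : E →L[𝕜] F)†) x
  have hxy : ((U.symm : F →L[𝕜] E)†) y = x := U.adjoint_symm_adjoint_apply x
  have hVW : ∀ i, (V i).map ((U.symm : F →L[𝕜] E) : F →ₗ[𝕜] E) ≤ W i :=
    fun i => ((Submodule.map_symm_eq_iff U.toLinearEquiv).mpr rfl).le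
  have ht : Summable (fusionFrameTerm W v y) := h.summable hA y
  have hs : Summable (fusionFrameTerm V v x) := hxy ▸ summable_fusionFrameTerm_adjoint hVW ht
  have hst : ∑' i, fusionFrameTerm V v x i ≤ b ^ 2 * ∑' i, fusionFrameTerm W v y i :=
    hxy ▸ tsum_fusionFrameTerm_adjoint_le hVW ht
  have hts : ∑' i, fusionFrameTerm W v y i ≤ a ^ 2 * ∑' i, fusionFrameTerm V v x i :=
    tsum_fusionFrameTerm_adjoint_le (fun _ => le_rfl) hs
  have hy : ‖y‖ ≤ a * ‖x‖ := by
    simpa only [LinearIsometryEquiv.norm_map] using ((U : E →L[𝕜] F)†).le_opNorm x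
  have hx : ‖x‖ ≤ b * ‖y‖ := by
    simpa only [LinearIsometryEquiv.norm_map, hxy] using ((U.symm : F →L[𝕜] E)†).le_opNorm y
  constructor
  · rw [div_mul_eq_mul_div]
    refine div_le_of_le_mul₀ (by positivity) (tsum_nonneg fun _ => ?_) ?_
    · unfold fusionFrameTerm; positivity
    calc A * ‖x‖ ^ 2 ≤ A * (b * ‖y‖) ^ 2 := by gcongr
      _ = b ^ 2 * (A * ‖y‖ ^ 2) := by ring
      _ ≤ b ^ 2 * (a ^ 2 * ∑' i, fusionFrameTerm V v x i) :=
        mul_le_mul_of_nonneg_left ((h y).1.trans hts) (sq_nonneg b)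
      _ = (∑' i, fusionFrameTerm V v x i) * (a ^ 2 * b ^ 2) := by ring
  · calc ∑' i, fusionFrameTerm V v x i ≤ b ^ 2 * (B * ‖y‖ ^ 2) :=
          hst.trans (by gcongr; exact (h y).2)
      _ ≤ b ^ 2 * (B * (a * ‖x‖) ^ 2) := by gcongr; linarith
      _ = B * (a ^ 2 * b ^ 2) * ‖x‖ ^ 2 := by ring

end Adjoint

end

theorem fusion_frame_invertible_image_general
    {𝕜 H : Type*} [RCLike 𝕜] [NormedAddCommGroup H] [InnerProductSpace 𝕜 H]
    [CompleteSpace H] {I : Type*}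
    (W : I → Submodule 𝕜 H) [∀ i, CompleteSpace ↥(W i)]
    (U : H ≃L[𝕜] H)
    [∀ i, CompleteSpace ↥((W i).map ((U : H →L[𝕜] H) : H →ₗ[𝕜] H))]
    (v : I → ℝ)
    (A B : ℝ) (hA : 0 < A) (hAB : A ≤ B)
    (hframe : ∀ x : H,
      A * ‖x‖ ^ 2 ≤ ∑' i, (v i) ^ 2 * ‖(Submodule.orthogonalProjectionOnto (W i) x : H)‖ ^ 2 ∧
      ∑' i, (v i) ^ 2 * ‖(Submodule.orthogonalProjectionOnto (W i) x : H)‖ ^ 2 ≤ B * ‖x‖ ^ 2) :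
    ∀ x : H,
      A / (‖(U : H →L[𝕜] H)‖ ^ 2 * ‖(U.symm : H →L[𝕜] H)‖ ^ 2) * ‖x‖ ^ 2 ≤
        ∑' i, (v i) ^ 2 *
          ‖(Submodule.orthogonalProjectionOnto ((W i).map ((U : H →L[𝕜] H) : H →ₗ[𝕜] H)) x : H)‖ ^ 2 ∧
      ∑' i, (v i) ^ 2 *
          ‖(Submodule.orthogonalProjectionOnto ((W i).map ((U : H →L[𝕜] H) : H →ₗ[𝕜] H)) x : H)‖ ^ 2 ≤
        B * (‖(U : H →L[𝕜] H)‖ ^ 2 * ‖(U.symm : H →L[𝕜] H)‖ ^ 2) * ‖x‖ ^ 2 :=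
  FusionFrameBounds.map_equiv (W := W) hframe hA hAB U

/-- If `{(W_i, v_i)}_{i∈I}` is a fusion frame for `H` with bounds `A` and `B` and `U` is a
bounded invertible operator on `H`, then `{(U W_i, v_i)}_{i∈I}` is a fusion frame for `H`
with bounds `A/(‖U‖²‖U⁻¹‖²)` and `B‖U‖²‖U⁻¹‖²`. -/
theorem fusion_frame_invertible_image
    {𝕜 H : Type*} [RCLike 𝕜] [NormedAddCommGroup H] [InnerProductSpace 𝕜 H]
    [CompleteSpace H] {I : Type*} [Countable I]
    (W : I → Submodule 𝕜 H) [∀ i, CompleteSpace ↥(W i)]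
    (U : H ≃L[𝕜] H)
    [∀ i, CompleteSpace ↥((W i).map ((U : H →L[𝕜] H) : H →ₗ[𝕜] H))]
    (v : I → ℝ) (hv : ∀ i, 0 < v i)
    (A B : ℝ) (hA : 0 < A) (hAB : A ≤ B)
    (hframe : ∀ x : H,
      A * ‖x‖ ^ 2 ≤ ∑' i, (v i) ^ 2 * ‖(Submodule.orthogonalProjectionOnto (W i) x : H)‖ ^ 2 ∧
      ∑' i, (v i) ^ 2 * ‖(Submodule.orthogonalProjectionOnto (W i) x : H)‖ ^ 2 ≤ B * ‖x‖ ^ 2) :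
    ∀ x : H,
      A / (‖(U : H →L[𝕜] H)‖ ^ 2 * ‖(U.symm : H →L[𝕜] H)‖ ^ 2) * ‖x‖ ^ 2 ≤
        ∑' i, (v i) ^ 2 *
          ‖(Submodule.orthogonalProjectionOnto ((W i).map ((U : H →L[𝕜] H) : H →ₗ[𝕜] H)) x : H)‖ ^ 2 ∧
      ∑' i, (v i) ^ 2 *
          ‖(Submodule.orthogonalProjectionOnto ((W i).map ((U : H →L[𝕜] H) : H →ₗ[𝕜] H)) x : H)‖ ^ 2 ≤
        B * (‖(U : H →L[𝕜] H)‖ ^ 2 * ‖(U.symm : H →L[𝕜] H)‖ ^ 2) * ‖x‖ ^ 2 :=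
  fusion_frame_invertible_image_general W U v A B hA hAB hframe
end

section
/- A family of closed subspaces {W_i}_{i∈I} of a Hilbert space H is an orthonormal fusion basis (H = ⊕_{i∈I} W_i as an orthogonal direct sum) if and only if {(W_i, 1)}_{i∈I} is a Parseval fusion frame, i.e., Σ_{i∈I} ‖P_{W_i} x‖² = ‖x‖² for all x ∈ H. -/
/-!
If the `W i` are mutually orthogonal with dense span, `H` is their Hilbert sum, so
`x ↦ (P_{W_i} x)_i` is an isometry of `H` onto `ℓ²`. Conversely, for `f ∈ W i` the Parseval
identity `‖f‖² = ‖P_{W_i} f‖² + ∑_{j ≠ i} ‖P_{W_j} f‖²` forces `P_{W_j} f = 0` for `j ≠ i`, and a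
vector orthogonal to every `W i` has all projections zero, hence norm zero.
-/

open scoped InnerProductSpace

section FusionFrame

variable {𝕜 E ι : Type*} [RCLike 𝕜] [NormedAddCommGroup E] [InnerProductSpace 𝕜 E]
  {W : ι → Submodule 𝕜 E}

theorem IsHilbertSum.coe_linearIsometryEquiv_apply [CompleteSpace E]
    [∀ i, (W i).HasOrthogonalProjection]
    (hS : IsHilbertSum 𝕜 (fun i => W i) fun i => (W i).subtypeₗᵢ) (x : E) (i : ι) :
    (hS.linearIsometryEquiv x i : E) = (W i).starProjection x := by
  let w := hS.linearIsometryEquiv x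
  have hx : HasSum (fun j => (w j : E)) x := by
    simpa [w] using hS.hasSum_linearIsometryEquiv_symm w
  have hsingle : HasSum (fun j => (W i).starProjection (w j)) ((W i).starProjection (w i)) :=
    hasSum_single i fun j hji =>
      ((W i).starProjection_apply_eq_zero_iff).mpr (hS.OrthogonalFamily.isOrtho hji (w j).2)
  rw [Submodule.starProjection_eq_self_iff.mpr (w i).2] at hsingle
  exact hsingle.unique ((W i).starProjection.hasSum hx)

theorem OrthogonalFamily.hasSum_norm_sq_starProjection [CompleteSpace E]
    [∀ i, CompleteSpace (W i)] (hW : OrthogonalFamily 𝕜 (fun i => W i) fun i => (W i).subtypeₗᵢ)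
    (hdense : (⨆ i, W i).topologicalClosure = ⊤) (x : E) :
    HasSum (fun i => ‖(W i).starProjection x‖ ^ 2) (‖x‖ ^ 2) := by
  have hS := IsHilbertSum.mkInternal W hW hdense.ge
  have hnorm := lp.hasSum_norm (p := 2) (by norm_num) (hS.linearIsometryEquiv x)
  simp only [ENNReal.toReal_ofNat, Real.rpow_two, LinearIsometryEquiv.norm_map] at hnorm
  simp only [← hS.coe_linearIsometryEquiv_apply]
  exact hnorm

theorem hasSum_norm_sq_starProjection_of_tsum_eq [∀ i, (W i).HasOrthogonalProjection]
    (hP : ∀ x : E, ∑' i, ‖(W i).starProjection x‖ ^ 2 = ‖x‖ ^ 2) (x : E) :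
    HasSum (fun i => ‖(W i).starProjection x‖ ^ 2) (‖x‖ ^ 2) := by
  rw [← hP x]
  refine Summable.hasSum ?_
  by_cases hx : x = 0
  · simp [hx]
  by_contra hs
  have hzero := hP x
  rw [tsum_eq_zero_of_not_summable hs] at hzero
  exact hx (by simpa using hzero.symm)

theorem orthogonalFamily_of_hasSum_norm_sq_starProjection [∀ i, (W i).HasOrthogonalProjection]
    (hP : ∀ x : E, HasSum (fun i => ‖(W i).starProjection x‖ ^ 2) (‖x‖ ^ 2)) :
    OrthogonalFamily 𝕜 (fun i => W i) fun i => (W i).subtypeₗᵢ := by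
  classical
  refine orthogonalFamily_iff_pairwise.mpr fun i j hij v hv => ?_
  rw [← Submodule.starProjection_apply_eq_zero_iff]
  have hle := sum_le_hasSum {i, j} (fun k _ => by positivity) (hP v)
  rw [Finset.sum_pair hij, Submodule.starProjection_eq_self_iff.mpr hv] at hle
  have hsq : ‖(W j).starProjection v‖ ^ 2 = 0 := le_antisymm (by linarith) (by positivity)
  simpa using hsq

theorem topologicalClosure_iSup_eq_top_of_hasSum_norm_sq_starProjection [CompleteSpace E]
    [∀ i, (W i).HasOrthogonalProjection]
    (hP : ∀ x : E, HasSum (fun i => ‖(W i).starProjection x‖ ^ 2) (‖x‖ ^ 2)) :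
    (⨆ i, W i).topologicalClosure = ⊤ := by
  rw [Submodule.topologicalClosure_eq_top_iff, ← Submodule.iInf_orthogonal,
    Submodule.eq_bot_iff]
  intro x hx
  have hzero (i : ι) : (W i).starProjection x = 0 :=
    ((W i).starProjection_apply_eq_zero_iff).mpr ((Submodule.mem_iInf _).mp hx i)
  have hsum := hP x
  simp only [hzero, norm_zero, zero_pow two_ne_zero] at hsum
  simpa using (hasSum_zero.unique hsum).symm

end FusionFrame

theorem orthonormal_fusion_basis_iff_parseval_general
    {𝕜 H : Type*} [RCLike 𝕜] [NormedAddCommGroup H] [InnerProductSpace 𝕜 H]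
    [CompleteSpace H] {I : Type*}
    (W : I → Submodule 𝕜 H) [∀ i, CompleteSpace ↥(W i)] :
    ((∀ i j, i ≠ j → ∀ f ∈ W i, ∀ g ∈ W j, ⟪f, g⟫_𝕜 = 0) ∧
      (⨆ i, W i).topologicalClosure = ⊤) ↔
    (∀ x : H, ∑' i, ‖((W i).orthogonalProjection x : H)‖ ^ 2 = ‖x‖ ^ 2) := by
  have hortho : (∀ i j, i ≠ j → ∀ f ∈ W i, ∀ g ∈ W j, ⟪f, g⟫_𝕜 = 0) ↔
      OrthogonalFamily 𝕜 (fun i => W i) fun i => (W i).subtypeₗᵢ := by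
    simp only [orthogonalFamily_iff_pairwise, Pairwise, Submodule.isOrtho_iff_inner_eq]
  rw [hortho]
  constructor
  · rintro ⟨hW, hdense⟩ x
    exact (hW.hasSum_norm_sq_starProjection hdense x).tsum_eq
  · intro hP
    have hP' := hasSum_norm_sq_starProjection_of_tsum_eq hP
    exact ⟨orthogonalFamily_of_hasSum_norm_sq_starProjection hP',
      topologicalClosure_iSup_eq_top_of_hasSum_norm_sq_starProjection hP'⟩

/-- A family of closed subspaces `{W_i}_{i∈I}` of a Hilbert space `H` is an orthonormal
fusion basis (the subspaces are mutually orthogonal and their closed span is `H`) if and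
only if `{(W_i, 1)}_{i∈I}` is a Parseval fusion frame, i.e.
`Σ_i ‖P_{W_i} x‖² = ‖x‖²` for all `x ∈ H`. -/
theorem orthonormal_fusion_basis_iff_parseval
    {𝕜 H : Type*} [RCLike 𝕜] [NormedAddCommGroup H] [InnerProductSpace 𝕜 H]
    [CompleteSpace H] {I : Type*} [Countable I]
    (W : I → Submodule 𝕜 H) [∀ i, CompleteSpace ↥(W i)] :
    ((∀ i j, i ≠ j → ∀ f ∈ W i, ∀ g ∈ W j, ⟪f, g⟫_𝕜 = 0) ∧
      (⨆ i, W i).topologicalClosure = ⊤) ↔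
    (∀ x : H, ∑' i, ‖((W i).orthogonalProjection x : H)‖ ^ 2 = ‖x‖ ^ 2) :=
  orthonormal_fusion_basis_iff_parseval_general W
end

section
/- Let W = {(W_i, v_i)}_{i=1}^N be a fusion frame for Hⁿ and T a bounded invertible operator on Hⁿ. Then the redundancies satisfy R_W^± · k(T)⁻² ≤ R_{T(W)}^± ≤ R_W^± · k(T)², where k(T) = ‖T‖·‖T⁻¹‖ is the condition number of T. -/
/-!
Write `P_V` for the orthogonal projection onto `V` and `T†` for the adjoint of `T`. Testing
`P_K x` against vectors of `K` gives `‖P_{T V} x‖ ≤ ‖T⁻¹‖ ‖P_V (T† x)‖` and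
`‖P_V (T† x)‖ ≤ ‖T‖ ‖P_{T V} x‖`. Summing over the fusion frame compares the quadratic forms
`R_{T(W)}(x)` and `R_W(T† x)`, and `‖x‖ / ‖T⁻¹‖ ≤ ‖T† x‖ ≤ ‖T‖ ‖x‖` moves the sphere bounds
`R_W⁻ ‖y‖² ≤ R_W(y) ≤ R_W⁺ ‖y‖²` across, giving `R_W⁻ ≤ k(T)² R_{T(W)}⁻` and
`R_{T(W)}⁺ ≤ k(T)² R_W⁺`. The two remaining inequalities are the same ones for `T⁻¹` acting on
`T(W)`, since `T⁻¹(T(W)) = W` and `k(T⁻¹) = k(T)`.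
-/

open scoped InnerProductSpace
open ContinuousLinearMap Metric

theorem mul_zpow_neg_two_le_iff {α : Type*} [Field α] [LinearOrder α] [IsStrictOrderedRing α]
    {a b k : α} (hk : 0 < k) : a * k ^ (-2 : ℤ) ≤ b ↔ a ≤ b * k ^ 2 := by
  rw [zpow_neg, zpow_ofNat, mul_inv_le_iff₀ (by positivity)]

namespace Submodule

variable {𝕜 E : Type*} [RCLike 𝕜] [NormedAddCommGroup E] [InnerProductSpace 𝕜 E]

theorem norm_starProjection_le_of_forall_norm_inner_le (K : Submodule 𝕜 E)
    [K.HasOrthogonalProjection] (x : E) {c : ℝ} (hc : 0 ≤ c)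
    (h : ∀ y ∈ K, ‖⟪y, x⟫_𝕜‖ ≤ c * ‖y‖) : ‖K.starProjection x‖ ≤ c := by
  have hsq : ‖K.starProjection x‖ ^ 2 ≤ c * ‖K.starProjection x‖ :=
    calc ‖K.starProjection x‖ ^ 2 = RCLike.re ⟪K.starProjection x, x⟫_𝕜 :=
          (K.re_inner_starProjection_eq_normSq x).symm
      _ ≤ ‖⟪K.starProjection x, x⟫_𝕜‖ := RCLike.re_le_norm _
      _ ≤ c * ‖K.starProjection x‖ := h _ (K.starProjection_apply_mem x)
  nlinarith [norm_nonneg (K.starProjection x)]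

variable [CompleteSpace E]

theorem norm_starProjection_map_le (V : Submodule 𝕜 E) (T : E ≃L[𝕜] E)
    [V.HasOrthogonalProjection]
    [(V.map ((T : E →L[𝕜] E) : E →ₗ[𝕜] E)).HasOrthogonalProjection] (x : E) :
    ‖(V.map ((T : E →L[𝕜] E) : E →ₗ[𝕜] E)).starProjection x‖ ≤
      ‖(T.symm : E →L[𝕜] E)‖ * ‖V.starProjection (adjoint (T : E →L[𝕜] E) x)‖ := by
  refine norm_starProjection_le_of_forall_norm_inner_le _ x (by positivity) ?_
  rintro _ ⟨u, hu, rfl⟩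
  have hu_norm : ‖u‖ ≤ ‖(T.symm : E →L[𝕜] E)‖ * ‖T u‖ := by
    simpa using (T.symm : E →L[𝕜] E).le_opNorm (T u)
  calc ‖⟪T u, x⟫_𝕜‖ = ‖⟪u, V.starProjection (adjoint (T : E →L[𝕜] E) x)⟫_𝕜‖ := by
        rw [← inner_starProjection_left_eq_right, V.starProjection_eq_self_iff.mpr hu,
          adjoint_inner_right]
        rfl
    _ ≤ ‖u‖ * ‖V.starProjection (adjoint (T : E →L[𝕜] E) x)‖ := norm_inner_le_norm _ _
    _ ≤ ‖(T.symm : E →L[𝕜] E)‖ * ‖V.starProjection (adjoint (T : E →L[𝕜] E) x)‖ * ‖T u‖ := by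
        rw [mul_right_comm]
        gcongr

theorem norm_starProjection_adjoint_le (V : Submodule 𝕜 E) (T : E →L[𝕜] E)
    [V.HasOrthogonalProjection] [(V.map (T : E →ₗ[𝕜] E)).HasOrthogonalProjection] (x : E) :
    ‖V.starProjection (adjoint T x)‖ ≤ ‖T‖ * ‖(V.map (T : E →ₗ[𝕜] E)).starProjection x‖ := by
  refine norm_starProjection_le_of_forall_norm_inner_le _ _ (by positivity) fun u hu => ?_
  have hTu : T u ∈ V.map (T : E →ₗ[𝕜] E) := ⟨u, hu, rfl⟩
  calc ‖⟪u, adjoint T x⟫_𝕜‖ = ‖⟪T u, (V.map (T : E →ₗ[𝕜] E)).starProjection x⟫_𝕜‖ := by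
        rw [← inner_starProjection_left_eq_right, starProjection_eq_self_iff.mpr hTu,
          adjoint_inner_right]
    _ ≤ ‖T u‖ * ‖(V.map (T : E →ₗ[𝕜] E)).starProjection x‖ := norm_inner_le_norm _ _
    _ ≤ ‖T‖ * ‖(V.map (T : E →ₗ[𝕜] E)).starProjection x‖ * ‖u‖ := by
        rw [mul_right_comm]
        gcongr
        exact T.le_opNorm u

end Submodule

namespace ContinuousLinearEquiv

variable {𝕜 E : Type*} [RCLike 𝕜] [NormedAddCommGroup E] [InnerProductSpace 𝕜 E]

noncomputable def conditionNumber (T : E ≃L[𝕜] E) : ℝ :=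
  ‖(T : E →L[𝕜] E)‖ * ‖(T.symm : E →L[𝕜] E)‖

theorem conditionNumber_symm (T : E ≃L[𝕜] E) : T.symm.conditionNumber = T.conditionNumber :=
  mul_comm _ _

theorem one_le_conditionNumber [Nontrivial E] (T : E ≃L[𝕜] E) : 1 ≤ T.conditionNumber :=
  T.one_le_norm_mul_norm_symm

variable [CompleteSpace E]

theorem norm_le_norm_symm_mul_norm_adjoint (T : E ≃L[𝕜] E) (x : E) :
    ‖x‖ ≤ ‖(T.symm : E →L[𝕜] E)‖ * ‖adjoint (T : E →L[𝕜] E) x‖ := by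
  have hx : adjoint (T.symm : E →L[𝕜] E) (adjoint (T : E →L[𝕜] E) x) = x := by
    rw [← comp_apply, ← adjoint_comp, T.coe_comp_coe_symm, adjoint_id, id_apply]
  calc ‖x‖ = ‖adjoint (T.symm : E →L[𝕜] E) (adjoint (T : E →L[𝕜] E) x)‖ := by rw [hx]
    _ ≤ _ := by
      rw [← LinearIsometryEquiv.norm_map adjoint (T.symm : E →L[𝕜] E)]
      exact le_opNorm _ _

end ContinuousLinearEquiv

section FusionImage

variable {R M ι : Type*} [Semiring R] [AddCommMonoid M] [Module R M] [TopologicalSpace M]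

def fusionImage (T : M ≃L[R] M) (W : ι → Submodule R M) : ι → Submodule R M :=
  fun i => (W i).map ((T : M →L[R] M) : M →ₗ[R] M)

theorem fusionImage_symm_fusionImage (T : M ≃L[R] M) (W : ι → Submodule R M) :
    fusionImage T.symm (fusionImage T W) = W := by
  funext i
  simp [fusionImage, ← Submodule.map_comp]

end FusionImage

noncomputable section Redundancy

variable {𝕜 H ι : Type*} [RCLike 𝕜] [NormedAddCommGroup H] [InnerProductSpace 𝕜 H]
  [FiniteDimensional 𝕜 H] [Fintype ι]

/-- The paper's redundancy function `R_W` is the restriction of this form to the unit sphere. -/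
def redundancyFunction (W : ι → Submodule 𝕜 H) (x : H) : ℝ :=
  ∑ i, ‖(W i).starProjection x‖ ^ 2

def lowerRedundancy (W : ι → Submodule 𝕜 H) : ℝ :=
  ⨅ x : sphere (0 : H) 1, redundancyFunction W x

def upperRedundancy (W : ι → Submodule 𝕜 H) : ℝ :=
  ⨆ x : sphere (0 : H) 1, redundancyFunction W x

variable (W : ι → Submodule 𝕜 H)

theorem redundancyFunction_nonneg (x : H) : 0 ≤ redundancyFunction W x := by
  unfold redundancyFunction
  positivity

theorem redundancyFunction_smul (c : 𝕜) (x : H) :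
    redundancyFunction W (c • x) = ‖c‖ ^ 2 * redundancyFunction W x := by
  simp only [redundancyFunction, Finset.mul_sum, map_smul, norm_smul, mul_pow]

theorem redundancyFunction_le_card_mul_norm_sq (x : H) :
    redundancyFunction W x ≤ Fintype.card ι * ‖x‖ ^ 2 := by
  simpa [redundancyFunction] using Finset.sum_le_sum fun i (_ : i ∈ Finset.univ) =>
    pow_le_pow_left₀ (norm_nonneg _) ((W i).norm_starProjection_apply_le x) 2

theorem redundancyFunction_eq_norm_sq_mul {x : H} (hx : x ≠ 0) :
    redundancyFunction W x = ‖x‖ ^ 2 * redundancyFunction W ((‖x‖⁻¹ : 𝕜) • x) := by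
  rw [redundancyFunction_smul, ← mul_assoc, norm_inv, RCLike.norm_ofReal, abs_norm,
    ← mul_pow, mul_inv_cancel₀ (norm_ne_zero_iff.mpr hx), one_pow, one_mul]

theorem lowerRedundancy_nonneg : 0 ≤ lowerRedundancy W :=
  Real.iInf_nonneg fun _ => redundancyFunction_nonneg W _

theorem upperRedundancy_nonneg : 0 ≤ upperRedundancy W :=
  Real.iSup_nonneg fun _ => redundancyFunction_nonneg W _

theorem lowerRedundancy_mul_norm_sq_le (x : H) :
    lowerRedundancy W * ‖x‖ ^ 2 ≤ redundancyFunction W x := by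
  rcases eq_or_ne x 0 with rfl | hx
  · simpa using redundancyFunction_nonneg W 0
  rw [redundancyFunction_eq_norm_sq_mul W hx, mul_comm]
  gcongr
  exact ciInf_le (f := fun u : sphere (0 : H) 1 => redundancyFunction W u)
    ⟨0, Set.forall_mem_range.2 fun _ => redundancyFunction_nonneg W _⟩
    ⟨_, mem_sphere_zero_iff_norm.2 (norm_smul_inv_norm hx)⟩

theorem redundancyFunction_le_upperRedundancy_mul_norm_sq (x : H) :
    redundancyFunction W x ≤ upperRedundancy W * ‖x‖ ^ 2 := by
  rcases eq_or_ne x 0 with rfl | hx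
  · simp [redundancyFunction]
  rw [redundancyFunction_eq_norm_sq_mul W hx, mul_comm]
  gcongr
  refine le_ciSup (f := fun u : sphere (0 : H) 1 => redundancyFunction W u)
    ⟨Fintype.card ι, Set.forall_mem_range.2 fun u => ?_⟩
    ⟨_, mem_sphere_zero_iff_norm.2 (norm_smul_inv_norm hx)⟩
  simpa [norm_eq_of_mem_sphere u] using redundancyFunction_le_card_mul_norm_sq W u

section Adjoint

variable [CompleteSpace H]

theorem redundancyFunction_fusionImage_le (T : H ≃L[𝕜] H) (x : H) :
    redundancyFunction (fusionImage T W) x ≤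
      ‖(T.symm : H →L[𝕜] H)‖ ^ 2 * redundancyFunction W (adjoint (T : H →L[𝕜] H) x) := by
  rw [redundancyFunction, redundancyFunction, Finset.mul_sum]
  gcongr with i
  rw [← mul_pow]
  gcongr
  exact (W i).norm_starProjection_map_le T x

theorem redundancyFunction_adjoint_le (T : H ≃L[𝕜] H) (x : H) :
    redundancyFunction W (adjoint (T : H →L[𝕜] H) x) ≤
      ‖(T : H →L[𝕜] H)‖ ^ 2 * redundancyFunction (fusionImage T W) x := by
  rw [redundancyFunction, redundancyFunction, Finset.mul_sum]
  gcongr with i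
  rw [← mul_pow]
  gcongr
  exact (W i).norm_starProjection_adjoint_le (T : H →L[𝕜] H) x

end Adjoint

variable [Nontrivial H]

theorem lowerRedundancy_le_lowerRedundancy_fusionImage_mul (T : H ≃L[𝕜] H) :
    lowerRedundancy W ≤ lowerRedundancy (fusionImage T W) * T.conditionNumber ^ 2 := by
  have := FiniteDimensional.complete 𝕜 H
  have := NormedSpace.sphere_nonempty_rclike 𝕜 (E := H) zero_le_one
  have hW := lowerRedundancy_nonneg W
  refine (le_ciInf fun u => ?_).trans_eq (Real.iInf_mul_of_nonneg (by positivity) _).symm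
  set y := adjoint (T : H →L[𝕜] H) u
  calc lowerRedundancy W
      = lowerRedundancy W * ‖(u : H)‖ ^ 2 := by rw [norm_eq_of_mem_sphere u, one_pow, mul_one]
    _ ≤ lowerRedundancy W * (‖(T.symm : H →L[𝕜] H)‖ * ‖y‖) ^ 2 := by
        gcongr
        exact T.norm_le_norm_symm_mul_norm_adjoint u
    _ = ‖(T.symm : H →L[𝕜] H)‖ ^ 2 * (lowerRedundancy W * ‖y‖ ^ 2) := by ring
    _ ≤ ‖(T.symm : H →L[𝕜] H)‖ ^ 2 * redundancyFunction W y := by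
        gcongr
        exact lowerRedundancy_mul_norm_sq_le W y
    _ ≤ ‖(T.symm : H →L[𝕜] H)‖ ^ 2 *
          (‖(T : H →L[𝕜] H)‖ ^ 2 * redundancyFunction (fusionImage T W) u) := by
        gcongr
        exact redundancyFunction_adjoint_le W T u
    _ = redundancyFunction (fusionImage T W) u * T.conditionNumber ^ 2 := by
        rw [ContinuousLinearEquiv.conditionNumber]
        ring

theorem upperRedundancy_fusionImage_le_mul (T : H ≃L[𝕜] H) :
    upperRedundancy (fusionImage T W) ≤ upperRedundancy W * T.conditionNumber ^ 2 := by
  have := FiniteDimensional.complete 𝕜 H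
  have := NormedSpace.sphere_nonempty_rclike 𝕜 (E := H) zero_le_one
  have hW := upperRedundancy_nonneg W
  refine ciSup_le fun u => ?_
  set y := adjoint (T : H →L[𝕜] H) u
  calc redundancyFunction (fusionImage T W) u
      ≤ ‖(T.symm : H →L[𝕜] H)‖ ^ 2 * redundancyFunction W y :=
        redundancyFunction_fusionImage_le W T u
    _ ≤ ‖(T.symm : H →L[𝕜] H)‖ ^ 2 * (upperRedundancy W * ‖y‖ ^ 2) := by
        gcongr
        exact redundancyFunction_le_upperRedundancy_mul_norm_sq W y
    _ ≤ ‖(T.symm : H →L[𝕜] H)‖ ^ 2 *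
          (upperRedundancy W * (‖(T : H →L[𝕜] H)‖ * ‖(u : H)‖) ^ 2) := by
        gcongr
        simpa using (adjoint (T : H →L[𝕜] H)).le_opNorm u
    _ = upperRedundancy W * T.conditionNumber ^ 2 := by
        rw [norm_eq_of_mem_sphere u, ContinuousLinearEquiv.conditionNumber]
        ring

end Redundancy

theorem redundancy_invertible_image_bounds_general
    {𝕜 H : Type*} [RCLike 𝕜] [NormedAddCommGroup H] [InnerProductSpace 𝕜 H]
    [FiniteDimensional 𝕜 H] [Nontrivial H]
    {N : ℕ} (W : Fin N → Submodule 𝕜 H)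
    (T : H ≃L[𝕜] H) :
    ((⨅ x : Metric.sphere (0 : H) 1,
        ∑ i, ‖(Submodule.orthogonalProjectionOnto (W i) (x : H) : H)‖ ^ 2) *
      (‖(T : H →L[𝕜] H)‖ * ‖(T.symm : H →L[𝕜] H)‖) ^ (-2 : ℤ) ≤
      (⨅ x : Metric.sphere (0 : H) 1,
        ∑ i, ‖(Submodule.orthogonalProjectionOnto ((W i).map ((T : H →L[𝕜] H) : H →ₗ[𝕜] H))
          (x : H) : H)‖ ^ 2) ∧
      (⨅ x : Metric.sphere (0 : H) 1,
        ∑ i, ‖(Submodule.orthogonalProjectionOnto ((W i).map ((T : H →L[𝕜] H) : H →ₗ[𝕜] H))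
          (x : H) : H)‖ ^ 2) ≤
      (⨅ x : Metric.sphere (0 : H) 1,
        ∑ i, ‖(Submodule.orthogonalProjectionOnto (W i) (x : H) : H)‖ ^ 2) *
      (‖(T : H →L[𝕜] H)‖ * ‖(T.symm : H →L[𝕜] H)‖) ^ 2) ∧
    ((⨆ x : Metric.sphere (0 : H) 1,
        ∑ i, ‖(Submodule.orthogonalProjectionOnto (W i) (x : H) : H)‖ ^ 2) *
      (‖(T : H →L[𝕜] H)‖ * ‖(T.symm : H →L[𝕜] H)‖) ^ (-2 : ℤ) ≤
      (⨆ x : Metric.sphere (0 : H) 1,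
        ∑ i, ‖(Submodule.orthogonalProjectionOnto ((W i).map ((T : H →L[𝕜] H) : H →ₗ[𝕜] H))
          (x : H) : H)‖ ^ 2) ∧
      (⨆ x : Metric.sphere (0 : H) 1,
        ∑ i, ‖(Submodule.orthogonalProjectionOnto ((W i).map ((T : H →L[𝕜] H) : H →ₗ[𝕜] H))
          (x : H) : H)‖ ^ 2) ≤
      (⨆ x : Metric.sphere (0 : H) 1,
        ∑ i, ‖(Submodule.orthogonalProjectionOnto (W i) (x : H) : H)‖ ^ 2) *
      (‖(T : H →L[𝕜] H)‖ * ‖(T.symm : H →L[𝕜] H)‖) ^ 2) := by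
  have hk : 0 < T.conditionNumber := zero_lt_one.trans_le T.one_le_conditionNumber
  have lower_inv := lowerRedundancy_le_lowerRedundancy_fusionImage_mul (fusionImage T W) T.symm
  have upper_inv := upperRedundancy_fusionImage_le_mul (fusionImage T W) T.symm
  rw [fusionImage_symm_fusionImage, T.conditionNumber_symm] at lower_inv upper_inv
  exact ⟨⟨(mul_zpow_neg_two_le_iff hk).2 (lowerRedundancy_le_lowerRedundancy_fusionImage_mul W T),
      lower_inv⟩,
    (mul_zpow_neg_two_le_iff hk).2 upper_inv, upperRedundancy_fusionImage_le_mul W T⟩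

/-- For a fusion frame `W` on a finite-dimensional Hilbert space and an invertible
operator `T`, the redundancies satisfy
`R_W^± · k(T)⁻² ≤ R_{T(W)}^± ≤ R_W^± · k(T)²` with `k(T) = ‖T‖‖T⁻¹‖`. -/
theorem redundancy_invertible_image_bounds
    {𝕜 H : Type*} [RCLike 𝕜] [NormedAddCommGroup H] [InnerProductSpace 𝕜 H]
    [FiniteDimensional 𝕜 H] [Nontrivial H]
    {N : ℕ} (W : Fin N → Submodule 𝕜 H) (v : Fin N → ℝ) (hv : ∀ i, 0 < v i)
    (A B : ℝ) (hA : 0 < A) (hAB : A ≤ B)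
    (hframe : ∀ x : H,
      A * ‖x‖ ^ 2 ≤ ∑ i, (v i) ^ 2 * ‖(Submodule.orthogonalProjectionOnto (W i) x : H)‖ ^ 2 ∧
      ∑ i, (v i) ^ 2 * ‖(Submodule.orthogonalProjectionOnto (W i) x : H)‖ ^ 2 ≤ B * ‖x‖ ^ 2)
    (T : H ≃L[𝕜] H) :
    ((⨅ x : Metric.sphere (0 : H) 1,
        ∑ i, ‖(Submodule.orthogonalProjectionOnto (W i) (x : H) : H)‖ ^ 2) *
      (‖(T : H →L[𝕜] H)‖ * ‖(T.symm : H →L[𝕜] H)‖) ^ (-2 : ℤ) ≤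
      (⨅ x : Metric.sphere (0 : H) 1,
        ∑ i, ‖(Submodule.orthogonalProjectionOnto ((W i).map ((T : H →L[𝕜] H) : H →ₗ[𝕜] H))
          (x : H) : H)‖ ^ 2) ∧
      (⨅ x : Metric.sphere (0 : H) 1,
        ∑ i, ‖(Submodule.orthogonalProjectionOnto ((W i).map ((T : H →L[𝕜] H) : H →ₗ[𝕜] H))
          (x : H) : H)‖ ^ 2) ≤
      (⨅ x : Metric.sphere (0 : H) 1,
        ∑ i, ‖(Submodule.orthogonalProjectionOnto (W i) (x : H) : H)‖ ^ 2) *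
      (‖(T : H →L[𝕜] H)‖ * ‖(T.symm : H →L[𝕜] H)‖) ^ 2) ∧
    ((⨆ x : Metric.sphere (0 : H) 1,
        ∑ i, ‖(Submodule.orthogonalProjectionOnto (W i) (x : H) : H)‖ ^ 2) *
      (‖(T : H →L[𝕜] H)‖ * ‖(T.symm : H →L[𝕜] H)‖) ^ (-2 : ℤ) ≤
      (⨆ x : Metric.sphere (0 : H) 1,
        ∑ i, ‖(Submodule.orthogonalProjectionOnto ((W i).map ((T : H →L[𝕜] H) : H →ₗ[𝕜] H))
          (x : H) : H)‖ ^ 2) ∧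
      (⨆ x : Metric.sphere (0 : H) 1,
        ∑ i, ‖(Submodule.orthogonalProjectionOnto ((W i).map ((T : H →L[𝕜] H) : H →ₗ[𝕜] H))
          (x : H) : H)‖ ^ 2) ≤
      (⨆ x : Metric.sphere (0 : H) 1,
        ∑ i, ‖(Submodule.orthogonalProjectionOnto (W i) (x : H) : H)‖ ^ 2) *
      (‖(T : H →L[𝕜] H)‖ * ‖(T.symm : H →L[𝕜] H)‖) ^ 2) :=
  redundancy_invertible_image_bounds_general W T
end

section
/- Let Φ = {φ_i}_{i=1}^N be a frame for Hⁿ with frame operator S_Φ, and let Ψ = {S_Φ⁻¹ φ_i}_{i=1}^N be the canonical dual frame. Then the redundancies satisfy R_Φ^± · k(S_Φ)⁻² ≤ R_Ψ^± ≤ R_Φ^± · k(S_Φ)², where k(S_Φ) = ‖S_Φ‖·‖S_Φ⁻¹‖. -/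
/-!
For a unit vector `x` put `v = S⁻¹ x`. As `S⁻¹` is self-adjoint, `⟪ψ i, x⟫ = ⟪φ i, v⟫`, so
`R_Ψ(x)` and `R_Φ(v / ‖v‖)` differ only through the factors `‖v‖² ∈ [‖S‖⁻², ‖S⁻¹‖²]` and
`‖φ i‖² / ‖ψ i‖² ∈ [‖S⁻¹‖⁻², ‖S‖²]`, hence lie within a factor `k(S)²` of each other. Since `Φ` is
in turn `S = (S⁻¹)⁻¹` applied to `Ψ`, exchanging the roles of the two frames gives the comparison
in the other direction, and together they bound the infima and suprema over the unit sphere.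
-/

open scoped InnerProductSpace
open Metric

section Redundancy

variable (𝕜 : Type*) {H ι : Type*} [RCLike 𝕜] [NormedAddCommGroup H] [InnerProductSpace 𝕜 H]
  [Fintype ι]

noncomputable def redundancy (φ : ι → H) (x : H) : ℝ :=
  ∑ i, ‖⟪φ i, x⟫_𝕜‖ ^ 2 / ‖φ i‖ ^ 2

variable {𝕜}

lemma redundancy_nonneg (φ : ι → H) (x : H) : 0 ≤ redundancy 𝕜 φ x := by
  unfold redundancy; positivity

lemma redundancy_le_card_mul_norm_sq (φ : ι → H) (x : H) :
    redundancy 𝕜 φ x ≤ Fintype.card ι * ‖x‖ ^ 2 := by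
  calc redundancy 𝕜 φ x ≤ ∑ _i : ι, ‖x‖ ^ 2 := by
        refine Finset.sum_le_sum fun i _ ↦ div_le_of_le_mul₀ (by positivity) (by positivity) ?_
        rw [← mul_pow, mul_comm]
        exact pow_le_pow_left₀ (norm_nonneg _) (norm_inner_le_norm _ _) 2
    _ = Fintype.card ι * ‖x‖ ^ 2 := by simp

lemma redundancy_smul (φ : ι → H) (c : 𝕜) (x : H) :
    redundancy 𝕜 φ (c • x) = ‖c‖ ^ 2 * redundancy 𝕜 φ x := by
  simp only [redundancy, inner_smul_right, norm_mul, mul_pow, Finset.mul_sum, mul_div_assoc]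

lemma bddBelow_range_redundancy (φ : ι → H) {α : Type*} (x : α → H) :
    BddBelow (Set.range fun a ↦ redundancy 𝕜 φ (x a)) :=
  ⟨0, by rintro _ ⟨a, rfl⟩; exact redundancy_nonneg φ _⟩

lemma bddAbove_range_redundancy_sphere (φ : ι → H) :
    BddAbove (Set.range fun x : sphere (0 : H) 1 ↦ redundancy 𝕜 φ x) :=
  ⟨Fintype.card ι, by
    rintro _ ⟨x, rfl⟩
    simpa [norm_eq_of_mem_sphere x] using redundancy_le_card_mul_norm_sq (𝕜 := 𝕜) φ x⟩

end Redundancy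

lemma LinearMap.isSymmetric_of_apply_eq_sum_inner_smul {𝕜 H ι : Type*} [RCLike 𝕜]
    [NormedAddCommGroup H] [InnerProductSpace 𝕜 H] [Fintype ι] (φ : ι → H) (S : H →ₗ[𝕜] H)
    (hS : ∀ x, S x = ∑ i, ⟪φ i, x⟫_𝕜 • φ i) : S.IsSymmetric := by
  have : S = ∑ i, (InnerProductSpace.rankOne 𝕜 (φ i) (φ i) : H →ₗ[𝕜] H) := by
    ext x; simp [hS]
  exact this ▸ isSymmetric_sum _ fun i _ ↦ InnerProductSpace.isSymmetric_rankOne_self (φ i)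

namespace ContinuousLinearEquiv

variable {𝕜 E F : Type*} [NontriviallyNormedField 𝕜] [NormedAddCommGroup E] [NormedSpace 𝕜 E]
  [NormedAddCommGroup F] [NormedSpace 𝕜 F]

noncomputable def condNumber (T : E ≃L[𝕜] F) : ℝ :=
  ‖(T : E →L[𝕜] F)‖ * ‖(T.symm : F →L[𝕜] E)‖

lemma condNumber_symm (T : E ≃L[𝕜] F) : T.symm.condNumber = T.condNumber :=
  mul_comm _ _

lemma sum_div_norm_sq_le (T : E ≃L[𝕜] F) {ι : Type*} (s : Finset ι) (u : ι → E) {a : ι → ℝ}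
    (ha : ∀ i, 0 ≤ a i) :
    ∑ i ∈ s, a i / ‖u i‖ ^ 2 ≤ ‖(T : E →L[𝕜] F)‖ ^ 2 * ∑ i ∈ s, a i / ‖T (u i)‖ ^ 2 := by
  rw [Finset.mul_sum]
  refine Finset.sum_le_sum fun i _ ↦ ?_
  rcases eq_or_ne (u i) 0 with hu | hu
  · rw [hu, norm_zero, zero_pow two_ne_zero, div_zero]
    exact mul_nonneg (sq_nonneg _) (div_nonneg (ha i) (sq_nonneg _))
  have hTu : T (u i) ≠ 0 := by simpa using hu
  rw [← mul_div_assoc, div_le_div_iff₀ (by positivity) (by positivity)]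
  calc a i * ‖T (u i)‖ ^ 2 ≤ a i * (‖(T : E →L[𝕜] F)‖ * ‖u i‖) ^ 2 := by
        gcongr
        · exact ha i
        · exact (T : E →L[𝕜] F).le_opNorm (u i)
    _ = ‖(T : E →L[𝕜] F)‖ ^ 2 * a i * ‖u i‖ ^ 2 := by ring

end ContinuousLinearEquiv

lemma iInf_le_mul_iInf_of_forall_exists {α β : Type*} [Nonempty β] {f : α → ℝ} {g : β → ℝ}
    {c : ℝ} (hc : 0 ≤ c) (hf : BddBelow (Set.range f)) (h : ∀ b, ∃ a, f a ≤ c * g b) :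
    ⨅ a, f a ≤ c * ⨅ b, g b := by
  rw [Real.mul_iInf_of_nonneg hc]
  exact ciInf_mono_of_forall_exists hf h

lemma iSup_le_mul_iSup_of_forall_exists {α β : Type*} [Nonempty α] {f : α → ℝ} {g : β → ℝ}
    {c : ℝ} (hc : 0 ≤ c) (hg : BddAbove (Set.range g)) (h : ∀ a, ∃ b, f a ≤ c * g b) :
    ⨆ a, f a ≤ c * ⨆ b, g b := by
  rw [Real.mul_iSup_of_nonneg hc]
  exact ciSup_mono_of_forall_exists (hg.range_comp_left (monotone_mul_left_of_nonneg hc)) h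

lemma exists_redundancy_dual_le {𝕜 H ι : Type*} [RCLike 𝕜] [NormedAddCommGroup H]
    [InnerProductSpace 𝕜 H] [Fintype ι] (S : H ≃L[𝕜] H) (hS : (S : H →ₗ[𝕜] H).IsSymmetric)
    (φ ψ : ι → H) (hψ : ∀ i, ψ i = S.symm (φ i)) (x : sphere (0 : H) 1) :
    ∃ y : sphere (0 : H) 1,
      redundancy 𝕜 ψ x ≤ S.condNumber ^ 2 * redundancy 𝕜 φ y ∧
        redundancy 𝕜 φ y ≤ S.condNumber ^ 2 * redundancy 𝕜 ψ x := by
  set v := S.symm x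
  have hv : v ≠ 0 := by simpa [v] using ne_zero_of_mem_unit_sphere x
  set y : H := (‖v‖⁻¹ : 𝕜) • v
  refine ⟨⟨y, by simp [y, norm_smul, hv]⟩, ?_⟩
  have hv_le : ‖v‖ ≤ ‖(S.symm : H →L[𝕜] H)‖ := by
    simpa [norm_eq_of_mem_sphere x] using (S.symm : H →L[𝕜] H).le_opNorm x
  have hv_ge : 1 ≤ ‖(S : H →L[𝕜] H)‖ * ‖v‖ := by
    simpa [v, norm_eq_of_mem_sphere x] using (S : H →L[𝕜] H).le_opNorm v
  have hφv : redundancy 𝕜 φ v = ‖v‖ ^ 2 * redundancy 𝕜 φ y := by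
    simp [y, redundancy_smul, hv]
  have hS_symm : ∀ u w : H, ⟪S.symm u, w⟫_𝕜 = ⟪u, S.symm w⟫_𝕜 :=
    hS.toLinearMap_symm (T := S.toLinearEquiv)
  have hψx : redundancy 𝕜 ψ x = ∑ i, ‖⟪φ i, v⟫_𝕜‖ ^ 2 / ‖S.symm (φ i)‖ ^ 2 := by
    simp only [redundancy, hψ, hS_symm, v]
  have hψ_le : redundancy 𝕜 ψ x ≤ ‖(S : H →L[𝕜] H)‖ ^ 2 * redundancy 𝕜 φ v := by
    rw [hψx, redundancy]
    simpa using S.sum_div_norm_sq_le Finset.univ (fun i ↦ S.symm (φ i)) fun i ↦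
      sq_nonneg ‖⟪φ i, v⟫_𝕜‖
  have hφ_le : redundancy 𝕜 φ v ≤ ‖(S.symm : H →L[𝕜] H)‖ ^ 2 * redundancy 𝕜 ψ x := by
    rw [hψx, redundancy]
    exact S.symm.sum_div_norm_sq_le Finset.univ φ fun i ↦ sq_nonneg ‖⟪φ i, v⟫_𝕜‖
  have hy_nonneg := redundancy_nonneg (𝕜 := 𝕜) φ y
  constructor
  · calc redundancy 𝕜 ψ x ≤ ‖(S : H →L[𝕜] H)‖ ^ 2 * ‖v‖ ^ 2 * redundancy 𝕜 φ y := by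
          rw [mul_assoc, ← hφv]; exact hψ_le
      _ ≤ _ := by rw [ContinuousLinearEquiv.condNumber, mul_pow]; gcongr
  · calc redundancy 𝕜 φ y ≤ (‖(S : H →L[𝕜] H)‖ * ‖v‖) ^ 2 * redundancy 𝕜 φ y :=
          le_mul_of_one_le_left hy_nonneg (one_le_pow₀ hv_ge)
      _ ≤ _ := by
          rw [mul_pow, mul_assoc, ← hφv, ContinuousLinearEquiv.condNumber, mul_pow, mul_assoc]
          gcongr

theorem redundancy_canonical_dual_bounds_general
    {𝕜 H : Type*} [RCLike 𝕜] [NormedAddCommGroup H] [InnerProductSpace 𝕜 H]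
    [Nontrivial H]
    {N : ℕ} (φ : Fin N → H)
    (S : H ≃L[𝕜] H) (hS : ∀ x : H, S x = ∑ i, ⟪φ i, x⟫_𝕜 • φ i)
    (ψ : Fin N → H) (hψ : ∀ i, ψ i = S.symm (φ i)) :
    ((⨅ x : Metric.sphere (0 : H) 1, ∑ i, ‖⟪φ i, (x : H)⟫_𝕜‖ ^ 2 / ‖φ i‖ ^ 2) *
        (‖(S : H →L[𝕜] H)‖ * ‖(S.symm : H →L[𝕜] H)‖) ^ (-2 : ℤ) ≤
      (⨅ x : Metric.sphere (0 : H) 1, ∑ i, ‖⟪ψ i, (x : H)⟫_𝕜‖ ^ 2 / ‖ψ i‖ ^ 2) ∧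
      (⨅ x : Metric.sphere (0 : H) 1, ∑ i, ‖⟪ψ i, (x : H)⟫_𝕜‖ ^ 2 / ‖ψ i‖ ^ 2) ≤
      (⨅ x : Metric.sphere (0 : H) 1, ∑ i, ‖⟪φ i, (x : H)⟫_𝕜‖ ^ 2 / ‖φ i‖ ^ 2) *
        (‖(S : H →L[𝕜] H)‖ * ‖(S.symm : H →L[𝕜] H)‖) ^ 2) ∧
    ((⨆ x : Metric.sphere (0 : H) 1, ∑ i, ‖⟪φ i, (x : H)⟫_𝕜‖ ^ 2 / ‖φ i‖ ^ 2) *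
        (‖(S : H →L[𝕜] H)‖ * ‖(S.symm : H →L[𝕜] H)‖) ^ (-2 : ℤ) ≤
      (⨆ x : Metric.sphere (0 : H) 1, ∑ i, ‖⟪ψ i, (x : H)⟫_𝕜‖ ^ 2 / ‖ψ i‖ ^ 2) ∧
      (⨆ x : Metric.sphere (0 : H) 1, ∑ i, ‖⟪ψ i, (x : H)⟫_𝕜‖ ^ 2 / ‖ψ i‖ ^ 2) ≤
      (⨆ x : Metric.sphere (0 : H) 1, ∑ i, ‖⟪φ i, (x : H)⟫_𝕜‖ ^ 2 / ‖φ i‖ ^ 2) *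
        (‖(S : H →L[𝕜] H)‖ * ‖(S.symm : H →L[𝕜] H)‖) ^ 2) := by
  have : Nonempty (sphere (0 : H) 1) := NormedSpace.sphere_nonempty_rclike 𝕜 zero_le_one
  have hk : 0 < S.condNumber ^ 2 := by have := S.one_le_norm_mul_norm_symm; positivity
  have hS_symm : (S : H →ₗ[𝕜] H).IsSymmetric :=
    LinearMap.isSymmetric_of_apply_eq_sum_inner_smul φ _ hS
  have hψφ := exists_redundancy_dual_le S hS_symm φ ψ hψ
  have hφψ := exists_redundancy_dual_le S.symm (hS_symm.toLinearMap_symm (T := S.toLinearEquiv))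
    ψ φ (by simp [hψ])
  rw [S.condNumber_symm] at hφψ
  rw [← ContinuousLinearEquiv.condNumber.eq_1, zpow_neg, zpow_ofNat, ← div_eq_mul_inv,
    ← div_eq_mul_inv, div_le_iff₀' hk, div_le_iff₀' hk, mul_comm _ (S.condNumber ^ 2),
    mul_comm _ (S.condNumber ^ 2)]
  exact ⟨⟨iInf_le_mul_iInf_of_forall_exists hk.le (bddBelow_range_redundancy φ _)
        fun x ↦ (hψφ x).imp fun _ ↦ And.right,
      iInf_le_mul_iInf_of_forall_exists hk.le (bddBelow_range_redundancy ψ _)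
        fun x ↦ (hφψ x).imp fun _ ↦ And.right⟩,
    iSup_le_mul_iSup_of_forall_exists hk.le (bddAbove_range_redundancy_sphere ψ)
      fun x ↦ (hφψ x).imp fun _ ↦ And.left,
    iSup_le_mul_iSup_of_forall_exists hk.le (bddAbove_range_redundancy_sphere φ)
      fun x ↦ (hψφ x).imp fun _ ↦ And.left⟩

/-- For a frame `Φ = {φ_i}` for a finite-dimensional Hilbert space with frame operator
`S_Φ` and canonical dual `Ψ = {S_Φ⁻¹ φ_i}`, the redundancies satisfy
`R_Φ^± · k(S_Φ)⁻² ≤ R_Ψ^± ≤ R_Φ^± · k(S_Φ)²` with `k(S_Φ) = ‖S_Φ‖‖S_Φ⁻¹‖`. -/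
theorem redundancy_canonical_dual_bounds
    {𝕜 H : Type*} [RCLike 𝕜] [NormedAddCommGroup H] [InnerProductSpace 𝕜 H]
    [FiniteDimensional 𝕜 H] [Nontrivial H]
    {N : ℕ} (φ : Fin N → H) (hne : ∀ i, φ i ≠ 0)
    (hspan : Submodule.span 𝕜 (Set.range φ) = ⊤)
    (S : H ≃L[𝕜] H) (hS : ∀ x : H, S x = ∑ i, ⟪φ i, x⟫_𝕜 • φ i)
    (ψ : Fin N → H) (hψ : ∀ i, ψ i = S.symm (φ i)) :
    ((⨅ x : Metric.sphere (0 : H) 1, ∑ i, ‖⟪φ i, (x : H)⟫_𝕜‖ ^ 2 / ‖φ i‖ ^ 2) *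
        (‖(S : H →L[𝕜] H)‖ * ‖(S.symm : H →L[𝕜] H)‖) ^ (-2 : ℤ) ≤
      (⨅ x : Metric.sphere (0 : H) 1, ∑ i, ‖⟪ψ i, (x : H)⟫_𝕜‖ ^ 2 / ‖ψ i‖ ^ 2) ∧
      (⨅ x : Metric.sphere (0 : H) 1, ∑ i, ‖⟪ψ i, (x : H)⟫_𝕜‖ ^ 2 / ‖ψ i‖ ^ 2) ≤
      (⨅ x : Metric.sphere (0 : H) 1, ∑ i, ‖⟪φ i, (x : H)⟫_𝕜‖ ^ 2 / ‖φ i‖ ^ 2) *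
        (‖(S : H →L[𝕜] H)‖ * ‖(S.symm : H →L[𝕜] H)‖) ^ 2) ∧
    ((⨆ x : Metric.sphere (0 : H) 1, ∑ i, ‖⟪φ i, (x : H)⟫_𝕜‖ ^ 2 / ‖φ i‖ ^ 2) *
        (‖(S : H →L[𝕜] H)‖ * ‖(S.symm : H →L[𝕜] H)‖) ^ (-2 : ℤ) ≤
      (⨆ x : Metric.sphere (0 : H) 1, ∑ i, ‖⟪ψ i, (x : H)⟫_𝕜‖ ^ 2 / ‖ψ i‖ ^ 2) ∧
      (⨆ x : Metric.sphere (0 : H) 1, ∑ i, ‖⟪ψ i, (x : H)⟫_𝕜‖ ^ 2 / ‖ψ i‖ ^ 2) ≤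
      (⨆ x : Metric.sphere (0 : H) 1, ∑ i, ‖⟪φ i, (x : H)⟫_𝕜‖ ^ 2 / ‖φ i‖ ^ 2) *
        (‖(S : H →L[𝕜] H)‖ * ‖(S.symm : H →L[𝕜] H)‖) ^ 2) :=
  redundancy_canonical_dual_bounds_general φ S hS ψ hψ
end
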